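/- The triangle Δ = {(x,y) | 0 ≤ x, 0 ≤ y, x + y ≤ 1} is forward-invariant under the flow of the system x' = x(3x + 4y − 3), y' = y(3x + 4y − 4): any solution starting in Δ remains in Δ for all later times. -/

import Mathlib

/-!
Each of `x`, `y` and `1 - (x + y)` solves a scalar linear equation `u' = u · a` with continuous
coefficient (`a = 3x + 4y` for the last one), hence equals its initial value times
`exp (∫₀ᵗ a)` and keeps the sign of that initial value.
-/

open Real

section LinearODE

variable {u a : ℝ → ℝ}

theorem eq_mul_exp_integral_of_hasDerivAt_mul (ha : Continuous a)
    (hu : ∀ t, HasDerivAt u (u t * a t) t) (t : ℝ) :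
    u t = u 0 * exp (∫ s in (0 : ℝ)..t, a s) := by
  set A : ℝ → ℝ := fun t => ∫ s in (0 : ℝ)..t, a s
  have hA : ∀ t, HasDerivAt A (a t) t := fun t =>
    intervalIntegral.integral_hasDerivAt_right (ha.intervalIntegrable 0 t)
      (ha.stronglyMeasurableAtFilter _ _) ha.continuousAt
  have hderiv : ∀ t, HasDerivAt (fun t => u t * exp (-A t)) 0 t := fun t =>
    ((hu t).mul (hA t).neg.exp).congr_deriv (by ring)
  have hconst : u t * exp (-A t) = u 0 * exp (-A 0) :=
    is_const_of_deriv_eq_zero (fun s => (hderiv s).differentiableAt) (fun s => (hderiv s).deriv) t 0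
  have hA0 : A 0 = 0 := intervalIntegral.integral_same
  rw [hA0, neg_zero, exp_zero, mul_one] at hconst
  calc u t = u t * exp (-A t) * exp (A t) := by
        rw [mul_assoc, ← exp_add, neg_add_cancel, exp_zero, mul_one]
    _ = u 0 * exp (A t) := by rw [hconst]

theorem nonneg_of_hasDerivAt_mul (ha : Continuous a)
    (hu : ∀ t, HasDerivAt u (u t * a t) t) (h0 : 0 ≤ u 0) (t : ℝ) : 0 ≤ u t := by
  rw [eq_mul_exp_integral_of_hasDerivAt_mul ha hu t]
  positivity

end LinearODE

/-- The triangle Δ is forward invariant under the matter-radiation flow. -/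
theorem triangle_forward_invariant
    (x y : ℝ → ℝ)
    (hx : ∀ t, HasDerivAt x (x t * (3 * x t + 4 * y t - 3)) t)
    (hy : ∀ t, HasDerivAt y (y t * (3 * x t + 4 * y t - 4)) t)
    (h0 : 0 ≤ x 0 ∧ 0 ≤ y 0 ∧ x 0 + y 0 ≤ 1) :
    ∀ t, 0 ≤ t → 0 ≤ x t ∧ 0 ≤ y t ∧ x t + y t ≤ 1 := by
  obtain ⟨hx0, hy0, hxy0⟩ := h0
  have hxc : Continuous x := continuous_iff_continuousAt.2 fun t => (hx t).continuousAt
  have hyc : Continuous y := continuous_iff_continuousAt.2 fun t => (hy t).continuousAt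
  have hgap : ∀ t, HasDerivAt (fun t => 1 - (x t + y t))
      ((1 - (x t + y t)) * (3 * x t + 4 * y t)) t := fun t =>
    ((hx t).add (hy t)).const_sub 1 |>.congr_deriv (by ring)
  intro t _
  have hxt := nonneg_of_hasDerivAt_mul (by fun_prop) hx hx0 t
  have hyt := nonneg_of_hasDerivAt_mul (by fun_prop) hy hy0 t
  have hgapt := nonneg_of_hasDerivAt_mul (by fun_prop) hgap (by linarith) t
  exact ⟨hxt, hyt, by linarith⟩
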